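/- If for each n ∈ Λ the operator T_n satisfies ‖T_n f_n‖_{L^p(μ_n)}^p ≤ c̃^p ‖f_n‖_{L^p(μ_n)}^p, and for f on the disjoint union X with f_n = f|_{X_n} one has the pointwise identity T f(x) = max{T_n f_n(x), ‖f‖_1/μ(X)} for x ∈ X_n, then ‖Tf‖_p^p ≤ ∑_n ‖T_n f_n‖_p^p + ‖f‖_1^p μ(X)^{1−p} ≤ (c̃^p + 1)‖f‖_p^p for p ∈ [1,∞). -/

import Mathlib

/-!
With `c = ‖f‖₁ / μ(X)`, on each piece `(T f)^p = max(T_n f_n, c)^p ≤ (T_n f_n)^p + c^p`, and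
`c^p μ(X) = ‖f‖₁^p μ(X)^(1-p)`; this gives the first bound. For the second, sum the bounds on the
`T_n` and use Jensen's inequality `(‖f‖₁ / μ(X))^p ≤ ‖f‖_p^p / μ(X)`, a case of Hölder.
-/

open MeasureTheory
open scoped ENNReal

/-- The measure on the countable disjoint union of the measure spaces `(X_n, μ_n)`. -/
noncomputable def unionMeasure (X : ℕ → Type*) [∀ n, MeasurableSpace (X n)]
    (μ : ∀ n, Measure (X n)) : Measure (Σ n, X n) :=
  Measure.sum (fun n => (μ n).map (Sigma.mk n))

theorem measurableEmbedding_sigmaMk {ι : Type*} {X : ι → Type*} [∀ i, MeasurableSpace (X i)]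
    (i : ι) : MeasurableEmbedding (Sigma.mk i : X i → Σ i, X i) where
  injective := sigma_mk_injective
  measurable := measurable_iff_le_map.2 (iInf_le _ i)
  measurableSet_image' s hs := by
    refine MeasurableSpace.measurableSet_iInf.2 fun j => ?_
    change MeasurableSet (Sigma.mk j ⁻¹' (Sigma.mk i '' s))
    obtain rfl | hij := eq_or_ne i j
    · rwa [Set.preimage_image_eq _ sigma_mk_injective]
    · convert MeasurableSet.empty
      ext x
      simp [hij]

section unionMeasure

variable {X : ℕ → Type*} [∀ n, MeasurableSpace (X n)] (μ : ∀ n, Measure (X n))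

theorem lintegral_unionMeasure (h : (Σ n, X n) → ℝ≥0∞) :
    ∫⁻ x, h x ∂unionMeasure X μ = ∑' n, ∫⁻ x, h ⟨n, x⟩ ∂μ n := by
  rw [unionMeasure, lintegral_sum_measure]
  exact tsum_congr fun n => (measurableEmbedding_sigmaMk n).lintegral_map h

theorem unionMeasure_univ : unionMeasure X μ Set.univ = ∑' n, μ n Set.univ := by
  simpa using lintegral_unionMeasure μ 1

end unionMeasure

theorem lintegral_max_rpow_le {α : Type*} [MeasurableSpace α] (μ : Measure α) (T : α → ℝ≥0∞)
    (c : ℝ≥0∞) (p : ℝ) :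
    ∫⁻ x, max (T x) c ^ p ∂μ ≤ ∫⁻ x, T x ^ p ∂μ + c ^ p * μ Set.univ := by
  calc ∫⁻ x, max (T x) c ^ p ∂μ ≤ ∫⁻ x, (T x ^ p + c ^ p) ∂μ := by
        refine lintegral_mono fun x => ?_
        rcases max_choice (T x) c with h | h <;> rw [h]
        exacts [le_self_add, le_add_self]
    _ = ∫⁻ x, T x ^ p ∂μ + c ^ p * μ Set.univ := by
        rw [lintegral_add_right _ measurable_const, lintegral_const]

theorem ENNReal.div_rpow_mul_self {a b : ℝ≥0∞} (hb0 : b ≠ 0) (hbtop : b ≠ ∞) {p : ℝ}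
    (hp : 0 ≤ p) : (a / b) ^ p * b = a ^ p * b ^ (1 - p) := by
  rw [ENNReal.div_rpow_of_nonneg _ _ hp, ENNReal.rpow_sub _ _ hb0 hbtop, ENNReal.rpow_one,
    div_eq_mul_inv, div_eq_mul_inv, mul_right_comm, mul_assoc]

theorem lintegral_rpow_mul_measure_univ_rpow_le {α : Type*} [MeasurableSpace α] {μ : Measure α}
    (hμ0 : μ Set.univ ≠ 0) (hμtop : μ Set.univ ≠ ∞) {p : ℝ} (hp : 1 ≤ p) {f : α → ℝ≥0∞}
    (hf : AEMeasurable f μ) :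
    (∫⁻ x, f x ∂μ) ^ p * μ Set.univ ^ (1 - p) ≤ ∫⁻ x, f x ^ p ∂μ := by
  have hp0 : 0 < p := one_pos.trans_le hp
  have holder : ∫⁻ x, f x ∂μ ≤ (∫⁻ x, f x ^ p ∂μ) ^ (1 / p) * μ Set.univ ^ (1 - 1 / p) := by
    simpa [eLpNorm', enorm_eq_self] using
      eLpNorm'_le_eLpNorm'_mul_rpow_measure_univ one_pos hp hf.aestronglyMeasurable
  calc (∫⁻ x, f x ∂μ) ^ p * μ Set.univ ^ (1 - p)
      ≤ ((∫⁻ x, f x ^ p ∂μ) ^ (1 / p) * μ Set.univ ^ (1 - 1 / p)) ^ p * μ Set.univ ^ (1 - p) := by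
        gcongr
    _ = ∫⁻ x, f x ^ p ∂μ := by
        rw [ENNReal.mul_rpow_of_nonneg _ _ hp0.le, ← ENNReal.rpow_mul, ← ENNReal.rpow_mul,
          one_div_mul_cancel hp0.ne', ENNReal.rpow_one, mul_assoc,
          ← ENNReal.rpow_add _ _ hμ0 hμtop, sub_mul, one_div_mul_cancel hp0.ne', one_mul]
        simp

theorem stmt16_general (X : ℕ → Type*) [∀ n, MeasurableSpace (X n)] (μ : ∀ n, Measure (X n))
    (p : ℝ) (hp : 1 ≤ p) (ctil : ℝ≥0∞)
    (hν0 : unionMeasure X μ Set.univ ≠ 0) (hνfin : unionMeasure X μ Set.univ ≠ ∞)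
    (f : (Σ n, X n) → ℝ≥0∞) (hf : Measurable f)
    (Tn : ∀ n, X n → ℝ≥0∞)
    (hTn : ∀ n, ∫⁻ x, (Tn n x) ^ p ∂(μ n) ≤ ctil ^ p * ∫⁻ x, (f ⟨n, x⟩) ^ p ∂(μ n))
    (g : (Σ n, X n) → ℝ≥0∞)
    (hgT : ∀ n (x : X n),
      g ⟨n, x⟩ = max (Tn n x)
        ((∫⁻ y, f y ∂(unionMeasure X μ)) / unionMeasure X μ Set.univ)) :
    (∫⁻ x, g x ^ p ∂(unionMeasure X μ))
        ≤ (∑' n, ∫⁻ x, (Tn n x) ^ p ∂(μ n))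
          + (∫⁻ y, f y ∂(unionMeasure X μ)) ^ p * (unionMeasure X μ Set.univ) ^ (1 - p) ∧
    (∑' n, ∫⁻ x, (Tn n x) ^ p ∂(μ n))
        + (∫⁻ y, f y ∂(unionMeasure X μ)) ^ p * (unionMeasure X μ Set.univ) ^ (1 - p)
      ≤ (ctil ^ p + 1) * ∫⁻ x, f x ^ p ∂(unionMeasure X μ) := by
  set I := ∫⁻ y, f y ∂unionMeasure X μ
  set M := unionMeasure X μ Set.univ
  have hp0 : 0 ≤ p := zero_le_one.trans hp
  constructor
  · calc ∫⁻ x, g x ^ p ∂unionMeasure X μ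
        = ∑' n, ∫⁻ x, max (Tn n x) (I / M) ^ p ∂μ n := by
          simp only [lintegral_unionMeasure, hgT]
      _ ≤ ∑' n, (∫⁻ x, Tn n x ^ p ∂μ n + (I / M) ^ p * μ n Set.univ) :=
          ENNReal.tsum_le_tsum fun n => lintegral_max_rpow_le _ _ _ _
      _ = (∑' n, ∫⁻ x, Tn n x ^ p ∂μ n) + I ^ p * M ^ (1 - p) := by
          rw [ENNReal.tsum_add, ENNReal.tsum_mul_left, ← unionMeasure_univ,
            ENNReal.div_rpow_mul_self hν0 hνfin hp0]
  · rw [add_mul, one_mul]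
    gcongr
    · calc ∑' n, ∫⁻ x, Tn n x ^ p ∂μ n ≤ ∑' n, ctil ^ p * ∫⁻ x, f ⟨n, x⟩ ^ p ∂μ n :=
            ENNReal.tsum_le_tsum hTn
        _ = ctil ^ p * ∫⁻ x, f x ^ p ∂unionMeasure X μ := by
            rw [ENNReal.tsum_mul_left, lintegral_unionMeasure]
    · exact lintegral_rpow_mul_measure_univ_rpow_le hν0 hνfin hp hf.aemeasurable

/-- If each `T_n` satisfies `‖T_n f_n‖_p^p ≤ c̃^p ‖f_n‖_p^p` and the operator `T` on the
disjoint union satisfies `T f(x) = max{T_n f_n(x), ‖f‖₁/μ(X)}` for `x ∈ X_n`, then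
`‖Tf‖_p^p ≤ ∑_n ‖T_n f_n‖_p^p + ‖f‖₁^p μ(X)^(1-p) ≤ (c̃^p + 1) ‖f‖_p^p`. -/
theorem stmt16 (X : ℕ → Type*) [∀ n, MeasurableSpace (X n)] (μ : ∀ n, Measure (X n))
    (p : ℝ) (hp : 1 ≤ p) (ctil : ℝ≥0∞)
    (hν0 : unionMeasure X μ Set.univ ≠ 0) (hνfin : unionMeasure X μ Set.univ ≠ ∞)
    (f : (Σ n, X n) → ℝ≥0∞) (hf : Measurable f)
    (Tn : ∀ n, X n → ℝ≥0∞)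
    (hTn : ∀ n, ∫⁻ x, (Tn n x) ^ p ∂(μ n) ≤ ctil ^ p * ∫⁻ x, (f ⟨n, x⟩) ^ p ∂(μ n))
    (g : (Σ n, X n) → ℝ≥0∞) (hg : Measurable g)
    (hgT : ∀ n (x : X n),
      g ⟨n, x⟩ = max (Tn n x)
        ((∫⁻ y, f y ∂(unionMeasure X μ)) / unionMeasure X μ Set.univ)) :
    (∫⁻ x, g x ^ p ∂(unionMeasure X μ))
        ≤ (∑' n, ∫⁻ x, (Tn n x) ^ p ∂(μ n))
          + (∫⁻ y, f y ∂(unionMeasure X μ)) ^ p * (unionMeasure X μ Set.univ) ^ (1 - p) ∧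
    (∑' n, ∫⁻ x, (Tn n x) ^ p ∂(μ n))
        + (∫⁻ y, f y ∂(unionMeasure X μ)) ^ p * (unionMeasure X μ Set.univ) ^ (1 - p)
      ≤ (ctil ^ p + 1) * ∫⁻ x, f x ^ p ∂(unionMeasure X μ) :=
  stmt16_general X μ p hp ctil hν0 hνfin f hf Tn hTn g hgT
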